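/- arXiv:1105.2722 — 3 statements merged into one kernel-verified Lean document; each statement's English description precedes it below -/
import Mathlib

section
/- For every ε > 0 there is a constant C(ε) such that for all 0 < t ≤ 1, t^{1/2} |ln(t/e²)|^ε ∫₀^t (t-τ)^{-1/2} τ^{-1} |ln(τ/e²)|^{-1-ε} dτ ≤ C/ε. -/
/-!
Write `L τ = a - log τ`, which is `|log (τ / e²)|` for `a = 2` and `0 < τ ≤ 1`. The function
`L ^ (-ε) / ε` is a primitive of `τ⁻¹ L ^ (-1 - ε)` tending to `0` at `0⁺`, so
`∫₀ᶜ τ⁻¹ L ^ (-1 - ε) dτ = L c ^ (-ε) / ε`. Split the convolution integral at `t / 2`: on `(0, t/2]`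
the kernel `(t - τ) ^ (-1/2)` is at most `(t/2) ^ (-1/2)`, and on `(t/2, t]` the weight is at most
`(2 / t) L t ^ (-1 - ε)` while the kernel integrates to `2 √t`. After scaling by `√t L t ^ ε` this
leaves `√2 / ε + 4 / L t`, and `L t ≥ 2`.
-/

open MeasureTheory Set Filter Topology

section LogPrimitive

variable {a ε : ℝ}

lemma hasDerivAt_rpow_neg_sub_log_div (hε : ε ≠ 0) {x : ℝ} (hx : 0 < x)
    (hax : 0 < a - Real.log x) :
    HasDerivAt (fun y => (a - Real.log y) ^ (-ε) / ε) (x⁻¹ * (a - Real.log x) ^ (-1 - ε)) x := by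
  have hlog : HasDerivAt (fun y => a - Real.log y) (-x⁻¹) x := by
    simpa using (Real.hasDerivAt_log hx.ne').const_sub a
  refine ((hlog.rpow_const (p := -ε) (Or.inl hax.ne')).div_const ε).congr_deriv ?_
  rw [show -1 - ε = -ε - 1 by ring]
  field_simp

lemma tendsto_rpow_neg_sub_log_nhdsGT_zero (a : ℝ) (hε : 0 < ε) :
    Tendsto (fun y => (a - Real.log y) ^ (-ε)) (𝓝[>] 0) (𝓝 0) := by
  have : Tendsto (fun y => a - Real.log y) (𝓝[>] 0) atTop := by
    simpa only [sub_eq_add_neg, Function.comp_def] using tendsto_atTop_add_const_left _ a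
      (tendsto_neg_atBot_atTop.comp Real.tendsto_log_nhdsGT_zero)
  exact (tendsto_rpow_neg_atTop hε).comp this

lemma sub_log_pos_of_le {c x : ℝ} (hx : 0 < x) (hxc : x ≤ c) (hac : 0 < a - Real.log c) :
    0 < a - Real.log x := by
  linarith [Real.log_le_log hx hxc]

-- Since `Real.log 0 = 0`, the unmodified primitive would take the value `a ^ (-ε) / ε` at `0`.
lemma continuousOn_update_rpow_neg_sub_log_div (hε : 0 < ε) {c : ℝ}
    (hac : 0 < a - Real.log c) :
    ContinuousOn (Function.update (fun y => (a - Real.log y) ^ (-ε) / ε) 0 0) (Icc 0 c) := by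
  intro x hx
  rcases hx.1.eq_or_lt with rfl | hx0
  · rw [continuousWithinAt_update_same]
    have h := (tendsto_rpow_neg_sub_log_nhdsGT_zero a hε).div_const ε
    rw [zero_div] at h
    exact h.mono_left (nhdsWithin_mono _ fun y hy => lt_of_le_of_ne hy.1.1 (Ne.symm hy.2))
  · refine ((continuousAt_update_of_ne hx0.ne').2 ?_).continuousWithinAt
    exact (hasDerivAt_rpow_neg_sub_log_div hε.ne' hx0
      (sub_log_pos_of_le hx0 hx.2 hac)).continuousAt

lemma hasDerivAt_update_rpow_neg_sub_log_div (hε : 0 < ε) {c x : ℝ} (hx : x ∈ Ioo 0 c)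
    (hac : 0 < a - Real.log c) :
    HasDerivAt (Function.update (fun y => (a - Real.log y) ^ (-ε) / ε) 0 0)
      (x⁻¹ * (a - Real.log x) ^ (-1 - ε)) x :=
  (hasDerivAt_rpow_neg_sub_log_div hε.ne' hx.1
    (sub_log_pos_of_le hx.1 hx.2.le hac)).congr_of_eventuallyEq
      ((eventually_ne_nhds hx.1.ne').mono fun _ hy => Function.update_of_ne hy _ _)

lemma inv_mul_rpow_sub_log_nonneg {x : ℝ} (hx : 0 < x) (hax : 0 < a - Real.log x) :
    0 ≤ x⁻¹ * (a - Real.log x) ^ (-1 - ε) := by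
  positivity

lemma integrableOn_inv_mul_rpow_sub_log (hε : 0 < ε) {c : ℝ} (hac : 0 < a - Real.log c) :
    IntegrableOn (fun x => x⁻¹ * (a - Real.log x) ^ (-1 - ε)) (Ioc 0 c) :=
  intervalIntegral.integrableOn_deriv_of_nonneg (continuousOn_update_rpow_neg_sub_log_div hε hac)
    (fun _ hx => hasDerivAt_update_rpow_neg_sub_log_div hε hx hac)
    fun _ hx => inv_mul_rpow_sub_log_nonneg hx.1 (sub_log_pos_of_le hx.1 hx.2.le hac)

theorem setIntegral_inv_mul_rpow_sub_log (hε : 0 < ε) {c : ℝ} (hc : 0 < c)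
    (hac : 0 < a - Real.log c) :
    ∫ x in Ioc 0 c, x⁻¹ * (a - Real.log x) ^ (-1 - ε) = (a - Real.log c) ^ (-ε) / ε := by
  rw [← intervalIntegral.integral_of_le hc.le,
    intervalIntegral.integral_eq_sub_of_hasDerivAt_of_le hc.le
      (continuousOn_update_rpow_neg_sub_log_div hε hac)
      (fun _ hx => hasDerivAt_update_rpow_neg_sub_log_div hε hx hac)
      ((intervalIntegrable_iff_integrableOn_Ioc_of_le hc.le).2
        (integrableOn_inv_mul_rpow_sub_log hε hac)),
    Function.update_of_ne hc.ne', Function.update_self, sub_zero]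

end LogPrimitive

lemma inv_mul_rpow_sub_log_le {a p t τ : ℝ} (hp : p ≤ 0) (hτ : τ ∈ Ioc (t / 2) t)
    (hat : 0 < a - Real.log t) :
    τ⁻¹ * (a - Real.log τ) ^ p ≤ 2 / t * (a - Real.log t) ^ p := by
  have ht : 0 < t / 2 := by linarith [hτ.1, hτ.2]
  have hτ0 : 0 < τ := ht.trans hτ.1
  have hinv : τ⁻¹ ≤ 2 / t := by
    rw [← inv_div]
    exact inv_anti₀ ht hτ.1.le
  have hlog : Real.log τ ≤ Real.log t := Real.log_le_log hτ0 hτ.2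
  have hpow : (a - Real.log τ) ^ p ≤ (a - Real.log t) ^ p :=
    Real.rpow_le_rpow_of_nonpos hat (by linarith) hp
  exact mul_le_mul hinv hpow (Real.rpow_nonneg (by linarith) p)
    (div_nonneg zero_le_two (by linarith))

section KernelSplitting

variable {r t : ℝ}

lemma integrableOn_rpow_sub (hr : -1 < r) (ht : 0 ≤ t) :
    IntegrableOn (fun τ => (t - τ) ^ r) (Ioc 0 t) := by
  rw [← intervalIntegrable_iff_integrableOn_Ioc_of_le ht]
  simpa using
    ((intervalIntegral.intervalIntegrable_rpow' (a := 0) (b := t) hr).comp_sub_left t).symm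

lemma setIntegral_rpow_sub (hr : -1 < r) (ht : 0 ≤ t) :
    ∫ τ in Ioc 0 t, (t - τ) ^ r = t ^ (r + 1) / (r + 1) := by
  rw [← intervalIntegral.integral_of_le ht,
    intervalIntegral.integral_comp_sub_left (fun x => x ^ r) t, sub_self, sub_zero,
    integral_rpow (Or.inl hr), Real.zero_rpow (by linarith), sub_zero]

lemma rpow_sub_mul_le {g : ℝ → ℝ} {M τ : ℝ} (hr : r ≤ 0) (hτ : τ ∈ Ioc 0 t) (hgτ : 0 ≤ g τ)
    (hM : 0 ≤ M) (hgM : t / 2 < τ → g τ ≤ M) :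
    (t - τ) ^ r * g τ ≤ (t / 2) ^ r * g τ + M * (t - τ) ^ r := by
  have hkernel : 0 ≤ (t - τ) ^ r := Real.rpow_nonneg (by linarith [hτ.2]) r
  rcases le_or_gt τ (t / 2) with hnear | hfar
  · have : (t - τ) ^ r ≤ (t / 2) ^ r :=
      Real.rpow_le_rpow_of_nonpos (by linarith [hτ.1]) (by linarith) hr
    nlinarith
  · have : 0 ≤ (t / 2) ^ r := Real.rpow_nonneg (by linarith [hτ.1, hτ.2]) r
    nlinarith [hgM hfar]

theorem setIntegral_rpow_sub_mul_le {g : ℝ → ℝ} {M : ℝ} (hr : -1 < r) (hr0 : r ≤ 0) (ht : 0 < t)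
    (hg : IntegrableOn g (Ioc 0 t)) (hg0 : ∀ τ ∈ Ioc 0 t, 0 ≤ g τ)
    (hM : ∀ τ ∈ Ioc (t / 2) t, g τ ≤ M) :
    ∫ τ in Ioc 0 t, (t - τ) ^ r * g τ
      ≤ (t / 2) ^ r * (∫ τ in Ioc 0 t, g τ) + M * (t ^ (r + 1) / (r + 1)) := by
  have hM0 : 0 ≤ M := (hg0 t ⟨ht, le_rfl⟩).trans (hM t ⟨by linarith, le_rfl⟩)
  have hkernel := integrableOn_rpow_sub hr ht.le
  rw [← setIntegral_rpow_sub hr ht.le, ← integral_const_mul, ← integral_const_mul,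
    ← integral_add (hg.const_mul _) (hkernel.const_mul _)]
  refine integral_mono_of_nonneg ?_ ((hg.const_mul _).add (hkernel.const_mul _)) ?_
  · filter_upwards [ae_restrict_mem measurableSet_Ioc] with τ hτ
    exact mul_nonneg (Real.rpow_nonneg (by linarith [hτ.2]) r) (hg0 τ hτ)
  · filter_upwards [ae_restrict_mem measurableSet_Ioc] with τ hτ
    exact rpow_sub_mul_le hr0 hτ (hg0 τ hτ) hM0 fun hfar => hM τ ⟨hfar, hτ.2⟩

end KernelSplitting

theorem setIntegral_rpow_sub_mul_inv_mul_rpow_sub_log_le {a ε t : ℝ} (hε : 0 < ε) (ht : 0 < t)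
    (hat : 0 < a - Real.log t) :
    t ^ ((1 : ℝ) / 2) * (a - Real.log t) ^ ε *
        ∫ τ in Ioc 0 t, (t - τ) ^ (-(1 : ℝ) / 2) * (τ⁻¹ * (a - Real.log τ) ^ (-1 - ε))
      ≤ √2 / ε + 4 / (a - Real.log t) := by
  have hsplit := setIntegral_rpow_sub_mul_le (r := -(1 : ℝ) / 2) (by norm_num) (by norm_num) ht
    (integrableOn_inv_mul_rpow_sub_log hε hat)
    (fun τ hτ => inv_mul_rpow_sub_log_nonneg hτ.1 (sub_log_pos_of_le hτ.1 hτ.2 hat))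
    (fun τ hτ => inv_mul_rpow_sub_log_le (by linarith) hτ hat)
  rw [setIntegral_inv_mul_rpow_sub_log hε ht hat] at hsplit
  set A := a - Real.log t
  have hhalf : (t / 2) ^ (-(1 : ℝ) / 2) = √2 / √t := by
    rw [neg_div, Real.rpow_neg (by positivity), ← Real.sqrt_eq_rpow, Real.sqrt_div ht.le, inv_div]
  have hsqrt : 0 < √t := Real.sqrt_pos.2 ht
  have hAε : 0 < A ^ ε := Real.rpow_pos_of_pos hat ε
  calc t ^ ((1 : ℝ) / 2) * A ^ ε * _
      ≤ t ^ ((1 : ℝ) / 2) * A ^ ε * ((t / 2) ^ (-(1 : ℝ) / 2) * (A ^ (-ε) / ε)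
          + 2 / t * A ^ (-1 - ε) * (t ^ (-(1 : ℝ) / 2 + 1) / (-(1 : ℝ) / 2 + 1))) := by
        gcongr
    _ = √2 / ε + 4 / A := by
        rw [hhalf, Real.rpow_neg hat.le, sub_eq_add_neg, Real.rpow_add hat, Real.rpow_neg_one,
          Real.rpow_neg hat.le, show -(1 : ℝ) / 2 + 1 = 1 / 2 by norm_num, ← Real.sqrt_eq_rpow]
        field_simp
        rw [Real.sq_sqrt ht.le]
        ring

lemma abs_log_div_exp {a s : ℝ} (hs : 0 < s) (hsa : Real.log s ≤ a) :
    |Real.log (s / Real.exp a)| = a - Real.log s := by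
  rw [Real.log_div hs.ne' (Real.exp_ne_zero a), Real.log_exp, abs_of_nonpos (by linarith)]
  ring

/-- Singular integral estimate with logarithmic weights used in the fixed point
argument for the Boussinesq system: for every `ε > 0` there is `C(ε)` such that
for all `0 < t ≤ 1`,
`t^{1/2} |ln(t/e²)|^ε ∫₀^t (t-τ)^{-1/2} τ^{-1} |ln(τ/e²)|^{-1-ε} dτ ≤ C/ε`. -/
theorem stmt7 (ε : ℝ) (hε : 0 < ε) :
    ∃ C : ℝ, 0 < C ∧ ∀ t : ℝ, 0 < t → t ≤ 1 →
      t ^ ((1 : ℝ) / 2) * |Real.log (t / Real.exp 2)| ^ ε *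
        (∫ τ in (0 : ℝ)..t,
          (t - τ) ^ (-(1 : ℝ) / 2) * τ⁻¹ *
            |Real.log (τ / Real.exp 2)| ^ (-1 - ε)) ≤ C / ε := by
  refine ⟨2 + 2 * ε, by positivity, fun t ht ht1 => ?_⟩
  have hlog_nonpos : ∀ τ ∈ Ioc 0 t, Real.log τ ≤ 0 := fun τ hτ =>
    Real.log_nonpos hτ.1.le (hτ.2.trans ht1)
  have hA : 2 ≤ 2 - Real.log t := by linarith [hlog_nonpos t ⟨ht, le_rfl⟩]
  rw [abs_log_div_exp ht (by linarith), intervalIntegral.integral_of_le ht.le,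
    setIntegral_congr_fun measurableSet_Ioc fun τ hτ => by
      rw [abs_log_div_exp hτ.1 (by linarith [hlog_nonpos τ hτ]), mul_assoc]]
  have hsqrt2 : √2 ≤ 2 := by nlinarith [Real.sq_sqrt zero_le_two, Real.sqrt_nonneg 2]
  calc _ ≤ √2 / ε + 4 / (2 - Real.log t) :=
        setIntegral_rpow_sub_mul_inv_mul_rpow_sub_log_le hε ht (by linarith)
    _ ≤ 2 / ε + 2 := by
        gcongr
        rw [div_le_iff₀ (by linarith)]
        linarith
    _ = (2 + 2 * ε) / ε := by field_simp
end

section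
/- Let p ∈ (n/2, ∞) with n ≥ 2, and set ν(p) = (2p - n)/(2p) > 0. For every ε > 0 and every ν ∈ (0, ν(p)), there is a constant C such that for all 0 < t ≤ 1, t^{1/2}|ln(t/e²)| ∫₀^t (t-τ)^{-n/(2p)} τ^{-1/2} |ln(τ/e²)|^{-ε} dτ ≤ C t^ν. -/
/-!
On `(0, 1]` we have `|ln(τ/e²)| = 2 - ln τ ≥ 1`, so the logarithmic weight in the integral is at
most `1`. Since one of `τ`, `t - τ` is at least `t/2`, the Beta-type kernel `(t-τ)^{-a} τ^{-b}` is
dominated by `(t/2)^{-a} τ^{-b} + (t/2)^{-b} (t-τ)^{-a}`, whose integral over `[0, t]` is a constant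
times `t^{1-a-b}`. With `a = n/(2p)` and `b = 1/2` the left-hand side is then at most a constant
times `t^{1-a} |ln(t/e²)| = t^ν · t^δ |ln(t/e²)|`, where `δ = ν(p) - ν > 0`, and `t^δ |ln t|` is
bounded on `(0, 1]`.
-/

open MeasureTheory Set intervalIntegral

lemma rpow_neg_mul_rpow_neg_le {x y a b : ℝ} (hx : 0 < x) (hy : 0 < y) (ha : 0 ≤ a) (hb : 0 ≤ b) :
    x ^ (-a) * y ^ (-b) ≤ ((x + y) / 2) ^ (-a) * y ^ (-b) + ((x + y) / 2) ^ (-b) * x ^ (-a) := by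
  set m := (x + y) / 2 with hm_def
  have hm : 0 < m := by positivity
  have hx' : 0 ≤ m ^ (-b) * x ^ (-a) := by positivity
  have hy' : 0 ≤ m ^ (-a) * y ^ (-b) := by positivity
  rcases le_total y x with hyx | hxy
  · have hxm : x ^ (-a) ≤ m ^ (-a) :=
      Real.rpow_le_rpow_of_nonpos hm (by linarith) (neg_nonpos.mpr ha)
    linarith [mul_le_mul_of_nonneg_right hxm (Real.rpow_nonneg hy.le (-b))]
  · have hym : y ^ (-b) ≤ m ^ (-b) :=
      Real.rpow_le_rpow_of_nonpos hm (by linarith) (neg_nonpos.mpr hb)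
    linarith [mul_le_mul_of_nonneg_left hym (Real.rpow_nonneg hx.le (-a))]

lemma half_rpow_neg_mul_rpow {t : ℝ} (ht : 0 < t) (a b : ℝ) :
    (t / 2) ^ (-a) * t ^ (1 - b) = 2 ^ a * t ^ (1 - a - b) := by
  rw [Real.div_rpow ht.le zero_le_two, Real.rpow_neg zero_le_two, div_inv_eq_mul,
    show 1 - a - b = -a + (1 - b) by ring, Real.rpow_add ht]
  ring

lemma integral_rpow_neg_of_lt_one {b t : ℝ} (hb : b < 1) :
    ∫ τ in (0 : ℝ)..t, τ ^ (-b) = t ^ (1 - b) / (1 - b) := by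
  rw [integral_rpow (Or.inl (by linarith)), Real.zero_rpow (by linarith), sub_zero, neg_add_eq_sub]

lemma integral_sub_rpow_neg_of_lt_one {a t : ℝ} (ha : a < 1) :
    ∫ τ in (0 : ℝ)..t, (t - τ) ^ (-a) = t ^ (1 - a) / (1 - a) := by
  rw [integral_comp_sub_left (fun τ => τ ^ (-a)), sub_self, sub_zero,
    integral_rpow_neg_of_lt_one ha]

lemma intervalIntegrable_sub_rpow {a t : ℝ} (ha : -1 < a) :
    IntervalIntegrable (fun τ => (t - τ) ^ a) volume 0 t := by
  simpa using ((intervalIntegrable_rpow' (a := 0) (b := t) ha).comp_sub_left t).symm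

lemma integral_sub_rpow_neg_mul_rpow_neg_mul_le {a b t : ℝ} (ha : 0 ≤ a) (ha1 : a < 1)
    (hb : 0 ≤ b) (hb1 : b < 1) (ht : 0 < t) {w : ℝ → ℝ} (hw : ∀ τ ∈ Ioo 0 t, w τ ∈ Icc 0 1) :
    ∫ τ in (0 : ℝ)..t, (t - τ) ^ (-a) * τ ^ (-b) * w τ ≤
      (2 ^ a / (1 - b) + 2 ^ b / (1 - a)) * t ^ (1 - a - b) := by
  set g := fun τ => (t / 2) ^ (-a) * τ ^ (-b) + (t / 2) ^ (-b) * (t - τ) ^ (-a)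
  have hg_int : IntervalIntegrable g volume 0 t :=
    ((intervalIntegrable_rpow' (by linarith)).const_mul _).add
      ((intervalIntegrable_sub_rpow (by linarith)).const_mul _)
  have hg : ∫ τ in (0 : ℝ)..t, g τ = (2 ^ a / (1 - b) + 2 ^ b / (1 - a)) * t ^ (1 - a - b) := by
    rw [intervalIntegral.integral_add ((intervalIntegrable_rpow' (by linarith)).const_mul _)
        ((intervalIntegrable_sub_rpow (by linarith)).const_mul _),
      intervalIntegral.integral_const_mul, intervalIntegral.integral_const_mul,
      integral_rpow_neg_of_lt_one hb1, integral_sub_rpow_neg_of_lt_one ha1, mul_div_assoc',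
      mul_div_assoc', half_rpow_neg_mul_rpow ht, half_rpow_neg_mul_rpow ht, sub_right_comm 1 a b]
    ring
  rw [← hg, integral_of_le ht.le, integral_of_le ht.le, integral_Ioc_eq_integral_Ioo,
    integral_Ioc_eq_integral_Ioo]
  refine integral_mono_of_nonneg (ae_restrict_of_forall_mem measurableSet_Ioo fun τ hτ => ?_)
    (hg_int.1.mono_set Ioo_subset_Ioc_self)
    (ae_restrict_of_forall_mem measurableSet_Ioo fun τ hτ => ?_)
  · exact mul_nonneg (mul_nonneg (Real.rpow_nonneg (sub_pos.mpr hτ.2).le _)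
      (Real.rpow_nonneg hτ.1.le _)) (hw τ hτ).1
  · have hx : 0 < t - τ := sub_pos.mpr hτ.2
    calc (t - τ) ^ (-a) * τ ^ (-b) * w τ ≤ (t - τ) ^ (-a) * τ ^ (-b) :=
          mul_le_of_le_one_right
            (mul_nonneg (Real.rpow_nonneg hx.le _) (Real.rpow_nonneg hτ.1.le _)) (hw τ hτ).2
      _ ≤ g τ := by
          simpa [g, add_comm, mul_comm] using rpow_neg_mul_rpow_neg_le hx hτ.1 ha hb

lemma abs_log_div_exp_two {x : ℝ} (hx : 0 < x) (hx1 : x ≤ 1) :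
    |Real.log (x / Real.exp 2)| = 2 - Real.log x := by
  rw [Real.log_div hx.ne' (Real.exp_ne_zero 2), Real.log_exp,
    abs_of_nonpos (by linarith [Real.log_nonpos hx.le hx1])]
  ring

lemma abs_log_div_exp_two_rpow_neg_mem_Icc {x ε : ℝ} (hx : 0 < x) (hx1 : x ≤ 1) (hε : 0 ≤ ε) :
    |Real.log (x / Real.exp 2)| ^ (-ε) ∈ Icc 0 1 := by
  refine ⟨Real.rpow_nonneg (abs_nonneg _) _, Real.rpow_le_one_of_one_le_of_nonpos ?_ (by linarith)⟩
  rw [abs_log_div_exp_two hx hx1]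
  linarith [Real.log_nonpos hx.le hx1]

lemma rpow_mul_abs_log_div_exp_two_le {t δ : ℝ} (ht : 0 < t) (ht1 : t ≤ 1) (hδ : 0 < δ) :
    t ^ δ * |Real.log (t / Real.exp 2)| ≤ 2 + 1 / δ := by
  rw [abs_log_div_exp_two ht ht1]
  have h_pow : t ^ δ ≤ 1 := Real.rpow_le_one ht.le ht1 hδ.le
  have h_log : -(Real.log t * t ^ δ) < 1 / δ :=
    (neg_le_abs _).trans_lt (Real.abs_log_mul_self_rpow_lt t δ ht ht1 hδ)
  nlinarith

theorem stmt9_general (n : ℕ) (p : ℝ) (hp : (n : ℝ) / 2 < p)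
    (ε ν : ℝ) (hε : 0 < ε) (hνp : ν < (2 * p - n) / (2 * p)) :
    ∃ C : ℝ, 0 < C ∧ ∀ t : ℝ, 0 < t → t ≤ 1 →
      t ^ ((1 : ℝ) / 2) * |Real.log (t / Real.exp 2)| *
        (∫ τ in (0 : ℝ)..t,
          (t - τ) ^ (-(n : ℝ) / (2 * p)) * τ ^ (-(1 : ℝ) / 2) *
            |Real.log (τ / Real.exp 2)| ^ (-ε)) ≤ C * t ^ ν := by
  set a := (n : ℝ) / (2 * p)
  have hp0 : 0 < 2 * p := by linarith [(n.cast_nonneg : (0 : ℝ) ≤ n)]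
  have ha : 0 ≤ a := by positivity
  have ha1 : a < 1 := (div_lt_one hp0).mpr (by linarith)
  have hδ : 0 < 1 - a - ν := by
    rw [sub_div, div_self hp0.ne'] at hνp
    linarith
  set K := 2 ^ a / (1 - 1 / 2) + 2 ^ (1 / 2 : ℝ) / (1 - a)
  have hK : 0 < K := by have := sub_pos.mpr ha1; positivity
  refine ⟨K * (2 + 1 / (1 - a - ν)), by positivity, fun t ht ht1 => ?_⟩
  have hI := integral_sub_rpow_neg_mul_rpow_neg_mul_le ha ha1 (by norm_num : (0 : ℝ) ≤ 1 / 2)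
    (by norm_num) ht fun τ hτ =>
      abs_log_div_exp_two_rpow_neg_mem_Icc (ε := ε) hτ.1 (hτ.2.le.trans ht1) hε.le
  have hL := rpow_mul_abs_log_div_exp_two_le ht ht1 hδ
  rw [neg_div, neg_div]
  calc t ^ ((1 : ℝ) / 2) * |Real.log (t / Real.exp 2)| * _
      ≤ t ^ ((1 : ℝ) / 2) * |Real.log (t / Real.exp 2)| * (K * t ^ (1 - a - 1 / 2)) := by
        gcongr
    _ = K * t ^ ν * (t ^ (1 - a - ν) * |Real.log (t / Real.exp 2)|) := by
        rw [show 1 - a - 1 / 2 = ν + (1 - a - ν) - 1 / 2 by ring, Real.rpow_sub ht,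
          Real.rpow_add ht]
        field_simp
    _ ≤ K * t ^ ν * (2 + 1 / (1 - a - ν)) := by gcongr
    _ = K * (2 + 1 / (1 - a - ν)) * t ^ ν := by ring

/-- Beta-function type singular integral estimate with logarithmic weights used
to bound the buoyancy term: for `n ≥ 2`, `p ∈ (n/2, ∞)`, `ν(p) = (2p-n)/(2p)`,
`ε > 0` and `0 < ν < ν(p)`, there is `C` with, for all `0 < t ≤ 1`,
`t^{1/2}|ln(t/e²)| ∫₀^t (t-τ)^{-n/(2p)} τ^{-1/2} |ln(τ/e²)|^{-ε} dτ ≤ C t^ν`. -/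
theorem stmt9 (n : ℕ) (hn : 2 ≤ n) (p : ℝ) (hp : (n : ℝ) / 2 < p)
    (ε ν : ℝ) (hε : 0 < ε) (hν : 0 < ν) (hνp : ν < (2 * p - n) / (2 * p)) :
    ∃ C : ℝ, 0 < C ∧ ∀ t : ℝ, 0 < t → t ≤ 1 →
      t ^ ((1 : ℝ) / 2) * |Real.log (t / Real.exp 2)| *
        (∫ τ in (0 : ℝ)..t,
          (t - τ) ^ (-(n : ℝ) / (2 * p)) * τ ^ (-(1 : ℝ) / 2) *
            |Real.log (τ / Real.exp 2)| ^ (-ε)) ≤ C * t ^ ν :=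
  stmt9_general n p hp ε ν hε hνp
end

section
/- Let X × Y be a product of Banach spaces. Let B₁ : X × X → X, B₂ : X × Y → Y be bilinear and L : Y → X linear, with ‖B₁(x₁,x₂)‖_X ≤ λ‖x₁‖_X‖x₂‖_X, ‖B₂(x,y)‖_Y ≤ λ‖x‖_X‖y‖_Y, and ‖L(y)‖_X ≤ η‖y‖_Y for λ, η > 0. Set c★ = max{2η, 1}. If (x₀, y₀) ∈ X × Y satisfies ‖x₀‖_X + c★‖y₀‖_Y < 1/(16λ), then the system (x, y) = (x₀, y₀) + (B₁(x,x), B₂(x,y)) + (L(y), 0) has a solution (x,y) with ‖x‖_X + c★‖y‖_Y ≤ 4(‖x₀‖_X + c★‖y₀‖_Y), and this solution is unique among those with ‖x‖_X + c★‖y‖_Y < 1/(4λ). -/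
/-!
Substituting `z = c★ • y` turns `‖x‖ + c★‖y‖` into the `ℓ¹` norm of `(x, z)` and `L` into
`c★⁻¹ • L`, whose norm is at most `1/2` because `c★ ≥ 2η`. The system becomes `p = p₀ + T p`
for a map `T` with `T 0 = 0` and `‖T p - T q‖ ≤ (λ(‖p‖ + ‖q‖) + 1/2)‖p - q‖`. If `‖p₀‖ = ε` with
`16λε < 1`, then `p ↦ p₀ + T p` maps the closed ball of radius `4ε` into itself and contracts it
with constant `8λε + 1/2 < 1`, and any two fixed points with `λ(‖p‖ + ‖q‖) < 1/2` coincide.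
-/

open Set Metric WithLp

section QuadraticFixedPoint

variable {E : Type*} [NormedAddCommGroup E] {T : E → E} {lam : ℝ}

theorem mapsTo_closedBall_of_quadratic (hT0 : T 0 = 0)
    (hT : ∀ p q, ‖T p - T q‖ ≤ (lam * (‖p‖ + ‖q‖) + 1 / 2) * ‖p - q‖)
    (hlam : 0 ≤ lam) {p₀ : E} {R : ℝ} (hR : 4 * ‖p₀‖ ≤ R) (hlamR : lam * R ≤ 1 / 4) :
    MapsTo (fun p => p₀ + T p) (closedBall 0 R) (closedBall 0 R) := by
  intro p hp
  rw [mem_closedBall_zero_iff] at hp ⊢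
  have hTp : ‖T p‖ ≤ (lam * ‖p‖ + 1 / 2) * ‖p‖ := by
    simpa [hT0] using hT p 0
  have : lam * ‖p‖ ≤ 1 / 4 := (mul_le_mul_of_nonneg_left hp hlam).trans hlamR
  calc ‖p₀ + T p‖ ≤ ‖p₀‖ + ‖T p‖ := norm_add_le _ _
    _ ≤ R / 4 + 3 / 4 * R := add_le_add (by linarith) (by nlinarith [norm_nonneg p])
    _ = R := by ring

theorem lipschitzOnWith_closedBall_of_quadratic
    (hT : ∀ p q, ‖T p - T q‖ ≤ (lam * (‖p‖ + ‖q‖) + 1 / 2) * ‖p - q‖)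
    (hlam : 0 ≤ lam) (p₀ : E) {R : ℝ} (hR : 0 ≤ R) :
    LipschitzOnWith (2 * lam * R + 1 / 2).toNNReal (fun p => p₀ + T p) (closedBall 0 R) := by
  refine LipschitzOnWith.of_dist_le_mul fun p hp q hq => ?_
  rw [mem_closedBall_zero_iff] at hp hq
  rw [dist_eq_norm, dist_eq_norm, add_sub_add_left_eq_sub,
    Real.coe_toNNReal _ (by positivity)]
  refine (hT p q).trans (mul_le_mul_of_nonneg_right ?_ (norm_nonneg _))
  nlinarith

theorem eq_of_fixed_of_quadratic
    (hT : ∀ p q, ‖T p - T q‖ ≤ (lam * (‖p‖ + ‖q‖) + 1 / 2) * ‖p - q‖)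
    {p₀ p q : E} (hp : p = p₀ + T p) (hq : q = p₀ + T q) (hpq : lam * (‖p‖ + ‖q‖) < 1 / 2) :
    p = q := by
  have h : ‖p - q‖ ≤ (lam * (‖p‖ + ‖q‖) + 1 / 2) * ‖p - q‖ := by
    calc ‖p - q‖ = ‖T p - T q‖ := by conv_lhs => rw [hp, hq, add_sub_add_left_eq_sub]
      _ ≤ _ := hT p q
  rw [← sub_eq_zero, ← norm_le_zero_iff]
  nlinarith [norm_nonneg (p - q)]

theorem exists_fixed_of_quadratic [CompleteSpace E] (hT0 : T 0 = 0)
    (hT : ∀ p q, ‖T p - T q‖ ≤ (lam * (‖p‖ + ‖q‖) + 1 / 2) * ‖p - q‖)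
    (hlam : 0 < lam) {p₀ : E} (hp₀ : ‖p₀‖ < 1 / (16 * lam)) :
    ∃ p, p = p₀ + T p ∧ ‖p‖ ≤ 4 * ‖p₀‖ ∧
      ∀ q, q = p₀ + T q → ‖q‖ < 1 / (4 * lam) → q = p := by
  set R := 4 * ‖p₀‖
  have hlamR : lam * R < 1 / 4 := by
    rw [lt_div_iff₀ (by positivity)] at hp₀
    linarith
  have hR : 0 ≤ R := by positivity
  have hmaps := mapsTo_closedBall_of_quadratic hT0 hT hlam.le le_rfl hlamR.le
  have hcontr : ContractingWith (2 * lam * R + 1 / 2).toNNReal (hmaps.restrict _ _ _) := by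
    refine ⟨?_, (lipschitzOnWith_closedBall_of_quadratic hT hlam.le p₀ hR).mapsToRestrict hmaps⟩
    rw [Real.toNNReal_lt_one]
    linarith
  obtain ⟨p, hpR, hp, -⟩ := hcontr.exists_fixedPoint' isClosed_closedBall.isComplete hmaps
    (mem_closedBall_self hR) (edist_ne_top _ _)
  rw [mem_closedBall_zero_iff] at hpR
  refine ⟨p, hp.symm, hpR, fun q hq hqsmall => eq_of_fixed_of_quadratic hT hq hp.symm ?_⟩
  rw [lt_div_iff₀ (by positivity)] at hqsmall
  nlinarith

end QuadraticFixedPoint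

theorem ContinuousLinearMap.norm_apply_apply_sub_le {𝕜 E F G : Type*} [NontriviallyNormedField 𝕜]
    [SeminormedAddCommGroup E] [NormedSpace 𝕜 E] [SeminormedAddCommGroup F] [NormedSpace 𝕜 F]
    [SeminormedAddCommGroup G] [NormedSpace 𝕜 G] (B : E →L[𝕜] F →L[𝕜] G) {lam : ℝ}
    (hB : ∀ x y, ‖B x y‖ ≤ lam * ‖x‖ * ‖y‖) (x x' : E) (y y' : F) :
    ‖B x y - B x' y'‖ ≤ lam * ‖x‖ * ‖y - y'‖ + lam * ‖x - x'‖ * ‖y'‖ := by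
  have : B x y - B x' y' = B x (y - y') + B (x - x') y' := by
    simp only [map_sub, sub_apply]; abel
  rw [this]
  exact (norm_add_le _ _).trans (add_le_add (hB _ _) (hB _ _))

theorem norm_toLp_one_smul_snd {E F : Type*} [SeminormedAddCommGroup E]
    [SeminormedAddCommGroup F] [NormedSpace ℝ F] {c : ℝ} (hc : 0 ≤ c) (x : E) (y : F) :
    ‖toLp 1 (x, c • y)‖ = ‖x‖ + c * ‖y‖ := by
  rw [prod_norm_eq_of_L1, toLp_fst, toLp_snd, norm_smul, Real.norm_of_nonneg hc]

section CoupledSystem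

variable {X Y : Type*} [NormedAddCommGroup X] [NormedSpace ℝ X]
  [NormedAddCommGroup Y] [NormedSpace ℝ Y]

noncomputable def coupledQuadratic (B₁ : X →L[ℝ] X →L[ℝ] X) (B₂ : X →L[ℝ] Y →L[ℝ] Y)
    (L : Y →L[ℝ] X) (p : WithLp 1 (X × Y)) : WithLp 1 (X × Y) :=
  toLp 1 (B₁ p.fst p.fst + L p.snd, B₂ p.fst p.snd)

variable (B₁ : X →L[ℝ] X →L[ℝ] X) (B₂ : X →L[ℝ] Y →L[ℝ] Y) (L : Y →L[ℝ] X)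

theorem coupledQuadratic_zero : coupledQuadratic B₁ B₂ L 0 = 0 := by
  simp [coupledQuadratic]

theorem norm_coupledQuadratic_sub_le {lam : ℝ} (hlam : 0 ≤ lam)
    (hB₁ : ∀ x₁ x₂ : X, ‖B₁ x₁ x₂‖ ≤ lam * ‖x₁‖ * ‖x₂‖)
    (hB₂ : ∀ (x : X) (y : Y), ‖B₂ x y‖ ≤ lam * ‖x‖ * ‖y‖)
    (hL : ∀ y : Y, ‖L y‖ ≤ 1 / 2 * ‖y‖) (p q : WithLp 1 (X × Y)) :
    ‖coupledQuadratic B₁ B₂ L p - coupledQuadratic B₁ B₂ L q‖ ≤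
      (lam * (‖p‖ + ‖q‖) + 1 / 2) * ‖p - q‖ := by
  have h₁ : ‖B₁ p.fst p.fst + L p.snd - (B₁ q.fst q.fst + L q.snd)‖ ≤
      lam * ‖p.fst‖ * ‖p.fst - q.fst‖ + lam * ‖p.fst - q.fst‖ * ‖q.fst‖ +
        1 / 2 * ‖p.snd - q.snd‖ := by
    rw [add_sub_add_comm, ← map_sub]
    exact (norm_add_le _ _).trans (add_le_add (B₁.norm_apply_apply_sub_le hB₁ _ _ _ _) (hL _))
  have h₂ := B₂.norm_apply_apply_sub_le hB₂ p.fst q.fst p.snd q.snd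
  simp only [coupledQuadratic, prod_norm_eq_of_L1, sub_fst, sub_snd, toLp_fst, toLp_snd] at h₁ h₂ ⊢
  have hdx := norm_nonneg (p.fst - q.fst)
  have hdy := norm_nonneg (p.snd - q.snd)
  have hb := norm_nonneg p.snd
  nlinarith [mul_nonneg (mul_nonneg hlam hb) hdx, mul_nonneg (mul_nonneg hlam
    (add_nonneg (add_nonneg hb (norm_nonneg q.fst)) (norm_nonneg q.snd))) hdy]

theorem toLp_smul_snd_eq_add_coupledQuadratic_iff {c : ℝ} (hc : c ≠ 0) (x₀ x : X) (y₀ y : Y) :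
    toLp 1 (x, c • y) =
        toLp 1 (x₀, c • y₀) + coupledQuadratic B₁ B₂ (c⁻¹ • L) (toLp 1 (x, c • y)) ↔
      x = x₀ + B₁ x x + L y ∧ y = y₀ + B₂ x y := by
  simp only [coupledQuadratic, toLp_fst, toLp_snd, ← toLp_add, (toLp_injective 1).eq_iff,
    Prod.mk_add_mk, Prod.mk.injEq, FunLike.coe_smul, Pi.smul_apply, map_smul, smul_inv_smul₀ hc,
    ← smul_add, smul_right_inj hc, add_assoc]

end CoupledSystem

theorem stmt10_general {X Y : Type*} [NormedAddCommGroup X] [NormedSpace ℝ X]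
    [CompleteSpace X] [NormedAddCommGroup Y] [NormedSpace ℝ Y] [CompleteSpace Y]
    (B₁ : X →L[ℝ] X →L[ℝ] X) (B₂ : X →L[ℝ] Y →L[ℝ] Y) (L : Y →L[ℝ] X)
    (lam η : ℝ) (hlam : 0 < lam)
    (hB₁ : ∀ x₁ x₂ : X, ‖B₁ x₁ x₂‖ ≤ lam * ‖x₁‖ * ‖x₂‖)
    (hB₂ : ∀ (x : X) (y : Y), ‖B₂ x y‖ ≤ lam * ‖x‖ * ‖y‖)
    (hL : ∀ y : Y, ‖L y‖ ≤ η * ‖y‖)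
    (x₀ : X) (y₀ : Y)
    (hdata : ‖x₀‖ + max (2 * η) 1 * ‖y₀‖ < 1 / (16 * lam)) :
    ∃ x : X, ∃ y : Y,
      x = x₀ + B₁ x x + L y ∧ y = y₀ + B₂ x y ∧
      ‖x‖ + max (2 * η) 1 * ‖y‖ ≤ 4 * (‖x₀‖ + max (2 * η) 1 * ‖y₀‖) ∧
      ∀ x' : X, ∀ y' : Y,
        x' = x₀ + B₁ x' x' + L y' → y' = y₀ + B₂ x' y' →
        ‖x'‖ + max (2 * η) 1 * ‖y'‖ < 1 / (4 * lam) →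
        x' = x ∧ y' = y := by
  set c := max (2 * η) 1
  have hc : 0 < c := one_pos.trans_le (le_max_right _ _)
  have hL' : ∀ y, ‖(c⁻¹ • L) y‖ ≤ 1 / 2 * ‖y‖ := fun y => by
    rw [FunLike.coe_smul, Pi.smul_apply, norm_smul, Real.norm_of_nonneg (inv_nonneg.2 hc.le),
      inv_mul_le_iff₀ hc]
    calc ‖L y‖ ≤ η * ‖y‖ := hL y
      _ ≤ c * (1 / 2 * ‖y‖) := by nlinarith [le_max_left (2 * η) 1, norm_nonneg y]
  have hiff := toLp_smul_snd_eq_add_coupledQuadratic_iff B₁ B₂ L hc.ne' x₀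
  obtain ⟨p, hp, hp_norm, hp_unique⟩ := exists_fixed_of_quadratic
    (coupledQuadratic_zero B₁ B₂ (c⁻¹ • L))
    (norm_coupledQuadratic_sub_le B₁ B₂ _ hlam.le hB₁ hB₂ hL') hlam
    (p₀ := toLp 1 (x₀, c • y₀)) (by rwa [norm_toLp_one_smul_snd hc.le])
  obtain ⟨x, y, rfl⟩ : ∃ x y, p = toLp 1 (x, c • y) :=
    ⟨p.fst, c⁻¹ • p.snd, by rw [smul_inv_smul₀ hc.ne']; rfl⟩
  rw [norm_toLp_one_smul_snd hc.le, norm_toLp_one_smul_snd hc.le] at hp_norm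
  refine ⟨x, y, ((hiff x y₀ y).1 hp).1, ((hiff x y₀ y).1 hp).2, hp_norm,
    fun x' y' hx' hy' hsmall => ?_⟩
  have := hp_unique _ ((hiff x' y₀ y').2 ⟨hx', hy'⟩) (by rwa [norm_toLp_one_smul_snd hc.le])
  rwa [(toLp_injective 1).eq_iff, Prod.mk.injEq, smul_right_inj hc.ne'] at this

/-- Abstract fixed-point lemma for a coupled bilinear system (Cannone):
if `B₁ : X × X → X`, `B₂ : X × Y → Y` are bilinear, `L : Y → X` is linear,
with `‖B₁(x₁,x₂)‖ ≤ λ‖x₁‖‖x₂‖`, `‖B₂(x,y)‖ ≤ λ‖x‖‖y‖`, `‖L y‖ ≤ η‖y‖`,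
and `c★ = max{2η,1}`, then for data with `‖x₀‖ + c★‖y₀‖ < 1/(16λ)` the system
`(x,y) = (x₀,y₀) + (B₁(x,x), B₂(x,y)) + (L y, 0)` has a solution with
`‖x‖ + c★‖y‖ ≤ 4(‖x₀‖ + c★‖y₀‖)`, unique among solutions with
`‖x‖ + c★‖y‖ < 1/(4λ)`. -/
theorem stmt10 {X Y : Type*} [NormedAddCommGroup X] [NormedSpace ℝ X]
    [CompleteSpace X] [NormedAddCommGroup Y] [NormedSpace ℝ Y] [CompleteSpace Y]
    (B₁ : X →L[ℝ] X →L[ℝ] X) (B₂ : X →L[ℝ] Y →L[ℝ] Y) (L : Y →L[ℝ] X)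
    (lam η : ℝ) (hlam : 0 < lam) (hη : 0 < η)
    (hB₁ : ∀ x₁ x₂ : X, ‖B₁ x₁ x₂‖ ≤ lam * ‖x₁‖ * ‖x₂‖)
    (hB₂ : ∀ (x : X) (y : Y), ‖B₂ x y‖ ≤ lam * ‖x‖ * ‖y‖)
    (hL : ∀ y : Y, ‖L y‖ ≤ η * ‖y‖)
    (x₀ : X) (y₀ : Y)
    (hdata : ‖x₀‖ + max (2 * η) 1 * ‖y₀‖ < 1 / (16 * lam)) :
    ∃ x : X, ∃ y : Y,
      x = x₀ + B₁ x x + L y ∧ y = y₀ + B₂ x y ∧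
      ‖x‖ + max (2 * η) 1 * ‖y‖ ≤ 4 * (‖x₀‖ + max (2 * η) 1 * ‖y₀‖) ∧
      ∀ x' : X, ∀ y' : Y,
        x' = x₀ + B₁ x' x' + L y' → y' = y₀ + B₂ x' y' →
        ‖x'‖ + max (2 * η) 1 * ‖y'‖ < 1 / (4 * lam) →
        x' = x ∧ y' = y :=
  stmt10_general B₁ B₂ L lam η hlam hB₁ hB₂ hL x₀ y₀ hdata
end
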